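/- With βₙ = n² + 2√n + 1/n for n a positive even perfect square, and with d₁ = d₁(n) determined by the transmission relation 2d₁(√βₙ·h(√βₙπ) - 2βₙ·tan(βₙπ)·sin(√βₙπ)·sinh(√βₙπ) + i(1 - cosh(√βₙπ)cos(√βₙπ) + √βₙ·tan(βₙπ)·h(√βₙπ))) = (2√βₙ·sin(√βₙπ)·sinh(√βₙπ) - i·h(√βₙπ))·(-tan(βₙπ)/(2βₙ²) + π/(2βₙ)), where h(x) = cosh(x)sin(x) + sinh(x)cos(x), one has the asymptotic equivalence 2·βₙ^{3/2}·d₁ ~ π²·√n as n → ∞. -/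

import Mathlib

/-!
With `k = √n = 2m` one has `√βₙ = k² + 1/k`, so `√βₙ π ≡ π/k (mod 2π)` because `k²` is even, and
`βₙ π ≡ π/k² (mod π)`. Divide the transmission relation by `k² sinh(√βₙ π)`: the bracket multiplying
`2 d₁` tends to `1`, its dominant part being `√βₙ h(√βₙ π) / (k² sinh(√βₙ π)) → 1` since
`coth → 1`, while `βₙ^{3/2} / (π² k³ sinh(√βₙ π))` times the right-hand side tends to `1`, because
`k sin(π/k) → π` and `k² tan(π/k²) → π`.
-/

open Real Filter Complex Topology

noncomputable section

lemma tendsto_mul_comp_div_atTop {f : ℝ → ℝ} {f' : ℝ} (hf : HasDerivAt f f' 0) (hf0 : f 0 = 0)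
    (c : ℝ) : Tendsto (fun x => x * f (c / x)) atTop (𝓝 (c * f')) := by
  rcases eq_or_ne c 0 with rfl | hc
  · simp [hf0]
  have hcx : Tendsto (fun x : ℝ => c / x) atTop (𝓝[≠] 0) :=
    tendsto_nhdsWithin_of_tendsto_nhds_of_eventually_within _
      (tendsto_const_nhds.div_atTop tendsto_id)
      ((eventually_gt_atTop 0).mono fun x hx => div_ne_zero hc hx.ne')
  refine ((hf.tendsto_slope_zero.comp hcx).const_mul c).congr' ?_
  filter_upwards [eventually_gt_atTop 0] with x hx
  simp only [Function.comp_apply, zero_add, hf0, sub_zero, smul_eq_mul]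
  field_simp

lemma tendsto_sinh_atTop : Tendsto Real.sinh atTop atTop :=
  tendsto_atTop_mono' atTop ((eventually_ge_atTop 0).mono fun _ => self_le_sinh_iff.2) tendsto_id

lemma tendsto_cosh_div_sinh_atTop : Tendsto (fun x => Real.cosh x / Real.sinh x) atTop (𝓝 1) := by
  have h := (tendsto_exp_neg_atTop_nhds_zero.div_atTop tendsto_sinh_atTop).const_add 1
  rw [add_zero] at h
  refine h.congr' ?_
  filter_upwards [eventually_gt_atTop 0] with x hx
  rw [← Real.cosh_sub_sinh, sub_div, div_self (sinh_pos_iff.2 hx).ne']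
  ring

lemma sq_rpow_three_halves {x : ℝ} (hx : 0 ≤ x) : (x ^ 2) ^ (3 / 2 : ℝ) = x ^ 3 := by
  rw [← Real.rpow_natCast_mul hx, ← Real.rpow_natCast]
  norm_num

namespace StringBeam

/-- `√βₙ` as a function of `k = √n`: indeed `βₙ = (k² + 1/k)²`. -/
def sqrtBeta (k : ℝ) : ℝ := k ^ 2 + 1 / k

lemma sqrtBeta_sq (k : ℝ) : sqrtBeta k ^ 2 = (k ^ 2) ^ 2 + 2 * k + 1 / k ^ 2 := by
  rcases eq_or_ne k 0 with rfl | hk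
  · simp [sqrtBeta]
  · unfold sqrtBeta; field_simp; ring

lemma exists_sqrtBeta_mul_pi_eq {k : ℕ} (hk : Even k) :
    ∃ j : ℕ, sqrtBeta k * π = π / k + j * (2 * π) := by
  obtain ⟨i, rfl⟩ := hk
  exact ⟨2 * i ^ 2, by unfold sqrtBeta; push_cast; ring⟩

lemma sin_sqrtBeta_mul_pi {k : ℕ} (hk : Even k) :
    Real.sin (sqrtBeta k * π) = Real.sin (π / k) := by
  obtain ⟨j, hj⟩ := exists_sqrtBeta_mul_pi_eq hk
  rw [hj, Real.sin_add_nat_mul_two_pi]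

lemma cos_sqrtBeta_mul_pi {k : ℕ} (hk : Even k) :
    Real.cos (sqrtBeta k * π) = Real.cos (π / k) := by
  obtain ⟨j, hj⟩ := exists_sqrtBeta_mul_pi_eq hk
  rw [hj, Real.cos_add_nat_mul_two_pi]

lemma tan_sqrtBeta_sq_mul_pi (k : ℕ) : Real.tan (sqrtBeta k ^ 2 * π) = Real.tan (π / k ^ 2) := by
  have : sqrtBeta k ^ 2 * π = π / k ^ 2 + (k ^ 4 + 2 * k : ℕ) * π := by
    rw [sqrtBeta_sq]; push_cast; ring
  rw [this, Real.tan_periodic.nat_mul]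

lemma tendsto_sqrtBeta_atTop : Tendsto sqrtBeta atTop atTop :=
  (tendsto_pow_atTop two_ne_zero).atTop_add (tendsto_const_nhds.div_atTop tendsto_id)

lemma tendsto_sqrtBeta_div_sq : Tendsto (fun k => sqrtBeta k / k ^ 2) atTop (𝓝 1) := by
  have h := (tendsto_const_nhds (x := (1 : ℝ))).div_atTop
    (tendsto_pow_atTop (α := ℝ) three_ne_zero)
  rw [← add_zero (1 : ℝ)]
  refine (h.const_add 1).congr' ?_
  filter_upwards [eventually_gt_atTop 0] with k hk
  unfold sqrtBeta
  field_simp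

/-- `h(√βπ) / sinh(√βπ)` with `sin(√βπ), cos(√βπ)` reduced to `sin(π/k), cos(π/k)`. -/
def hDivSinh (k : ℝ) : ℝ :=
  Real.cosh (sqrtBeta k * π) / Real.sinh (sqrtBeta k * π) * Real.sin (π / k) + Real.cos (π / k)

/-- The bracket multiplying `2 d₁`, reduced and divided by `k² sinh(√βπ)`. -/
def normDen (k : ℝ) : ℂ :=
  ((sqrtBeta k / k ^ 2 * hDivSinh k
      - 2 * (sqrtBeta k / k ^ 2) ^ 2 * (k ^ 2 * Real.tan (π / k ^ 2)) * Real.sin (π / k) : ℝ) : ℂ)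
    + I * ((1 / (k ^ 2 * Real.sinh (sqrtBeta k * π))
      - Real.cosh (sqrtBeta k * π) / Real.sinh (sqrtBeta k * π) * Real.cos (π / k) / k ^ 2
      + sqrtBeta k / k ^ 2 * Real.tan (π / k ^ 2) * hDivSinh k : ℝ) : ℂ)

/-- The right-hand side of the relation, reduced and multiplied by
`√β³ / (π² k³ sinh(√βπ))`. -/
def normNum (k : ℝ) : ℂ :=
  (((1 - Real.tan (π / k ^ 2) / (π * sqrtBeta k ^ 2)) * (sqrtBeta k / k ^ 2) ^ 2
      * (k * Real.sin (π / k)) / π : ℝ) : ℂ)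
    - I * ((hDivSinh k * (sqrtBeta k / k ^ 2) * (1 - Real.tan (π / k ^ 2) / (π * sqrtBeta k ^ 2))
      / (2 * π * k) : ℝ) : ℂ)

lemma tendsto_sin_pi_div : Tendsto (fun k : ℝ => Real.sin (π / k)) atTop (𝓝 0) :=
  (Real.continuous_sin.tendsto' 0 0 Real.sin_zero).comp (tendsto_const_nhds.div_atTop tendsto_id)

lemma tendsto_cos_pi_div : Tendsto (fun k : ℝ => Real.cos (π / k)) atTop (𝓝 1) :=
  (Real.continuous_cos.tendsto' 0 1 Real.cos_zero).comp (tendsto_const_nhds.div_atTop tendsto_id)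

lemma tendsto_tan_pi_div_sq : Tendsto (fun k : ℝ => Real.tan (π / k ^ 2)) atTop (𝓝 0) := by
  have h := (Real.continuousAt_tan.2 (by simp)).tendsto.comp
    ((tendsto_const_nhds (x := π)).div_atTop (tendsto_pow_atTop (α := ℝ) two_ne_zero))
  rwa [Real.tan_zero] at h

lemma tendsto_mul_sin_pi_div : Tendsto (fun k : ℝ => k * Real.sin (π / k)) atTop (𝓝 π) := by
  simpa using tendsto_mul_comp_div_atTop (Real.hasDerivAt_sin 0) Real.sin_zero π

lemma tendsto_sq_mul_tan_pi_div_sq :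
    Tendsto (fun k : ℝ => k ^ 2 * Real.tan (π / k ^ 2)) atTop (𝓝 π) := by
  have h := tendsto_mul_comp_div_atTop (Real.hasDerivAt_tan (by simp)) Real.tan_zero π
  rw [Real.cos_zero, one_pow, div_one, mul_one] at h
  exact h.comp (tendsto_pow_atTop two_ne_zero)

lemma tendsto_cosh_div_sinh_sqrtBeta_mul_pi :
    Tendsto (fun k => Real.cosh (sqrtBeta k * π) / Real.sinh (sqrtBeta k * π)) atTop (𝓝 1) :=
  tendsto_cosh_div_sinh_atTop.comp (tendsto_sqrtBeta_atTop.atTop_mul_const pi_pos)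

lemma tendsto_hDivSinh : Tendsto hDivSinh atTop (𝓝 1) := by
  unfold hDivSinh
  simpa using (tendsto_cosh_div_sinh_sqrtBeta_mul_pi.mul tendsto_sin_pi_div).add tendsto_cos_pi_div

lemma tendsto_normDen : Tendsto normDen atTop (𝓝 1) := by
  have hk2 := tendsto_pow_atTop (α := ℝ) two_ne_zero
  have hre := (tendsto_sqrtBeta_div_sq.mul tendsto_hDivSinh).sub
    ((((tendsto_sqrtBeta_div_sq.pow 2).const_mul 2).mul tendsto_sq_mul_tan_pi_div_sq).mul
      tendsto_sin_pi_div)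
  have him := ((tendsto_const_nhds (x := (1 : ℝ)).div_atTop (hk2.atTop_mul_atTop₀
    (tendsto_sinh_atTop.comp (tendsto_sqrtBeta_atTop.atTop_mul_const pi_pos)))).sub
    ((tendsto_cosh_div_sinh_sqrtBeta_mul_pi.mul tendsto_cos_pi_div).div_atTop hk2)).add
    ((tendsto_sqrtBeta_div_sq.mul tendsto_tan_pi_div_sq).mul tendsto_hDivSinh)
  unfold normDen
  simpa using ((continuous_ofReal.tendsto _).comp hre).add
    (tendsto_const_nhds (x := I) |>.mul ((continuous_ofReal.tendsto _).comp him))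

lemma tendsto_normNum : Tendsto normNum atTop (𝓝 1) := by
  have hβ : Tendsto (fun k => π * sqrtBeta k ^ 2) atTop atTop :=
    ((tendsto_pow_atTop two_ne_zero).comp tendsto_sqrtBeta_atTop).const_mul_atTop pi_pos
  have he := (tendsto_tan_pi_div_sq.div_atTop hβ).const_sub 1
  have hre := ((he.mul (tendsto_sqrtBeta_div_sq.pow 2)).mul tendsto_mul_sin_pi_div).div_const π
  have him := ((tendsto_hDivSinh.mul tendsto_sqrtBeta_div_sq).mul he).div_atTop
    (tendsto_id.const_mul_atTop (by positivity : (0 : ℝ) < 2 * π))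
  unfold normNum
  simpa [pi_ne_zero] using ((continuous_ofReal.tendsto _).comp hre).sub
    (tendsto_const_nhds (x := I) |>.mul ((continuous_ofReal.tendsto _).comp him))

lemma mul_normDen_eq_normNum {k : ℝ} (hk : 0 < k) {d : ℂ}
    (hrel : 2 * d *
        (((sqrtBeta k * (Real.cosh (sqrtBeta k * π) * Real.sin (π / k)
              + Real.sinh (sqrtBeta k * π) * Real.cos (π / k))
            - 2 * sqrtBeta k ^ 2 * Real.tan (π / k ^ 2) * Real.sin (π / k)
              * Real.sinh (sqrtBeta k * π) : ℝ) : ℂ)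
          + I * ((1 - Real.cosh (sqrtBeta k * π) * Real.cos (π / k)
            + sqrtBeta k * Real.tan (π / k ^ 2) * (Real.cosh (sqrtBeta k * π) * Real.sin (π / k)
              + Real.sinh (sqrtBeta k * π) * Real.cos (π / k)) : ℝ) : ℂ))
      = (((2 * sqrtBeta k * Real.sin (π / k) * Real.sinh (sqrtBeta k * π) : ℝ) : ℂ)
          - I * ((Real.cosh (sqrtBeta k * π) * Real.sin (π / k)
            + Real.sinh (sqrtBeta k * π) * Real.cos (π / k) : ℝ) : ℂ))
        * ((-Real.tan (π / k ^ 2) / (2 * (sqrtBeta k ^ 2) ^ 2)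
          + π / (2 * sqrtBeta k ^ 2) : ℝ) : ℂ)) :
    ((2 * sqrtBeta k ^ 3 : ℝ) : ℂ) * d / ((π ^ 2 * k : ℝ) : ℂ) * normDen k = normNum k := by
  have hρ : sqrtBeta k ≠ 0 := by unfold sqrtBeta; positivity
  have hS : Real.sinh (sqrtBeta k * π) ≠ 0 := (sinh_pos_iff.2 (by unfold sqrtBeta; positivity)).ne'
  unfold normDen normNum hDivSinh
  generalize Real.sinh (sqrtBeta k * π) = S at *
  generalize Real.cosh (sqrtBeta k * π) = C at *
  generalize sqrtBeta k = ρ at *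
  generalize Real.sin (π / k) = σ at *
  generalize Real.cos (π / k) = c at *
  generalize Real.tan (π / k ^ 2) = τ at *
  replace hk : (k : ℂ) ≠ 0 := ofReal_ne_zero.2 hk.ne'
  replace hρ : (ρ : ℂ) ≠ 0 := ofReal_ne_zero.2 hρ
  replace hS : (S : ℂ) ≠ 0 := ofReal_ne_zero.2 hS
  have hπ : (π : ℂ) ≠ 0 := ofReal_ne_zero.2 pi_ne_zero
  push_cast at hrel ⊢
  field_simp at hrel ⊢
  linear_combination hrel

end StringBeam

end

open StringBeam in
/-- The transmission relation forces 2·βₙ^{3/2}·d₁ ~ π²·√n along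
βₙ = n² + 2√n + 1/n, n = (2m)² an even perfect square:  hence the resolvent
sequence is unbounded and the string–beam system is not exponentially stable. -/
theorem d1_asymptotic_equivalence
    (n : ℕ → ℝ) (hn : ∀ m, n m = ((2 * m : ℕ) : ℝ)^2)
    (β : ℕ → ℝ) (hβ : ∀ m, β m = (n m)^2 + 2 * Real.sqrt (n m) + 1 / n m)
    (h : ℝ → ℝ) (hh : ∀ x, h x = Real.cosh x * Real.sin x + Real.sinh x * Real.cos x)
    (d : ℕ → ℂ)
    (hrel : ∀ m,
      2 * d m *
        (((Real.sqrt (β m) * h (Real.sqrt (β m) * π)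
            - 2 * β m * Real.tan (β m * π) * Real.sin (Real.sqrt (β m) * π)
              * Real.sinh (Real.sqrt (β m) * π) : ℝ) : ℂ)
          + Complex.I *
            ((1 - Real.cosh (Real.sqrt (β m) * π) * Real.cos (Real.sqrt (β m) * π)
              + Real.sqrt (β m) * Real.tan (β m * π) * h (Real.sqrt (β m) * π) : ℝ) : ℂ))
      = (((2 * Real.sqrt (β m) * Real.sin (Real.sqrt (β m) * π)
            * Real.sinh (Real.sqrt (β m) * π) : ℝ) : ℂ)
          - Complex.I * ((h (Real.sqrt (β m) * π) : ℝ) : ℂ))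
        * ((-Real.tan (β m * π) / (2 * (β m)^2) + π / (2 * β m) : ℝ) : ℂ)) :
    Tendsto
      (fun m => ((2 * β m ^ ((3:ℝ)/2) : ℝ) : ℂ) * d m / ((π^2 * Real.sqrt (n m) : ℝ) : ℂ))
      atTop (nhds 1) := by
  have hk : Tendsto (fun m : ℕ => ((2 * m : ℕ) : ℝ)) atTop atTop :=
    tendsto_natCast_atTop_atTop.comp (tendsto_id.const_mul_atTop' two_pos)
  have hlim := (tendsto_normNum.div tendsto_normDen one_ne_zero).comp hk
  rw [div_one] at hlim
  refine hlim.congr' ?_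
  filter_upwards [eventually_ge_atTop 1, hk.eventually (tendsto_normDen.eventually_ne one_ne_zero)]
    with m hm hden
  set k : ℝ := ((2 * m : ℕ) : ℝ)
  have hkpos : 0 < k := by positivity
  have hsqrtn : √(n m) = k := by rw [hn, Real.sqrt_sq hkpos.le]
  have hb : β m = sqrtBeta k ^ 2 := by rw [hβ, hsqrtn, sqrtBeta_sq, hn]
  have hsqrtb : √(β m) = sqrtBeta k := by
    rw [hb, Real.sqrt_sq (by unfold sqrtBeta; positivity)]
  have hr := hrel m
  rw [hsqrtb, hh, hb, sin_sqrtBeta_mul_pi (even_two_mul m), cos_sqrtBeta_mul_pi (even_two_mul m),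
    tan_sqrtBeta_sq_mul_pi] at hr
  show normNum k / normDen k = _
  rw [div_eq_iff hden, hsqrtn, hb, sq_rpow_three_halves (by unfold sqrtBeta; positivity)]
  exact (mul_normDen_eq_normNum hkpos hr).symm
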